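/- arXiv:2304.13478 — 3 statements merged into one kernel-verified Lean document; each statement's English description precedes it below -/
import Mathlib

section
/- For every n ≥ 2, the tensor rank of the n-partite W-state W_n = |0...01⟩ + |0...10⟩ + ... + |10...0⟩ in (ℂ²)^{⊗n} equals n. -/
/-- `T` admits a tensor decomposition with at most `r` elementary tensors. -/
def hasRankLE (n d : ℕ) (T : (Fin n → Fin d) → ℂ) (r : ℕ) : Prop :=
  ∃ v : Fin r → Fin n → Fin d → ℂ, ∀ j, T j = ∑ α, ∏ i, v α i (j i)

/-- The tensor rank of a multipartite tensor. -/
noncomputable def tensorRank (n d : ℕ) (T : (Fin n → Fin d) → ℂ) : ℕ :=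
  sInf {r | hasRankLE n d T r}

/-- The n-partite W-state: entry 1 on multi-indices with exactly one coordinate 1. -/
noncomputable def Wstate (n : ℕ) : (Fin n → Fin 2) → ℂ := fun j =>
  if (Finset.univ.filter (fun i => j i = 1)).card = 1 then 1 else 0

/-!
`W_n` is the sum of the `n` basis tensors with a single `1`, so its rank is at most `n`.

For the lower bound we show, by induction on `n`, that `W_n + c |0…0⟩` is not a sum of fewer
than `n` weighted elementary tensors. Splitting off the first factor, the slices at `0` and `1`
are `W_{n-1} + c |0…0⟩` and `|0…0⟩`. The latter is nonzero, so some term `β` has a nonzero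
`|1⟩`-coefficient in its first factor; adding the right multiple `c'` of the second slice to the
first kills term `β` and leaves a decomposition of `W_{n-1} + (c + c') |0…0⟩` with one term fewer.
The weights (and the `c |0…0⟩` correction) are what make the family closed under this step.
-/

open Finset

lemma Fin.cons_eq_zero_iff {m : ℕ} {α : Type*} [Zero α] {a : α} {t : Fin m → α} :
    (Fin.cons a t : Fin (m + 1) → α) = 0 ↔ a = 0 ∧ t = 0 :=
  Matrix.cons_eq_zero_iff

noncomputable def zeroState (n : ℕ) : (Fin n → Fin 2) → ℂ := fun j => if j = 0 then 1 else 0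

lemma Wstate_cons_zero {m : ℕ} (t : Fin m → Fin 2) :
    Wstate (m + 1) (Fin.cons 0 t) = Wstate m t := by
  simp [Wstate, Fin.card_filter_univ_succ]

lemma Wstate_cons_one {m : ℕ} (t : Fin m → Fin 2) :
    Wstate (m + 1) (Fin.cons 1 t) = zeroState m t := by
  have : (∀ i, t i ≠ 1) ↔ t = 0 := by
    simp only [funext_iff, Pi.zero_apply]
    exact forall_congr' fun i => by omega
  simp [Wstate, zeroState, Fin.card_filter_univ_succ, filter_eq_empty_iff, this]

lemma zeroState_cons_zero {m : ℕ} (t : Fin m → Fin 2) :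
    zeroState (m + 1) (Fin.cons 0 t) = zeroState m t := by
  simp [zeroState, Fin.cons_eq_zero_iff]

lemma zeroState_cons_one {m : ℕ} (t : Fin m → Fin 2) :
    zeroState (m + 1) (Fin.cons 1 t) = 0 := by
  simp [zeroState, Fin.cons_eq_zero_iff]

theorem le_of_Wstate_add_mul_zeroState_eq_sum {n r : ℕ} (c : ℂ) (w : Fin r → ℂ)
    (v : Fin r → Fin n → Fin 2 → ℂ)
    (hv : ∀ j, Wstate n j + c * zeroState n j = ∑ α, w α * ∏ i, v α i (j i)) : n ≤ r := by
  induction n generalizing c r with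
  | zero => exact Nat.zero_le r
  | succ m ih =>
    set S : Fin r → (Fin m → Fin 2) → ℂ := fun α t => ∏ i, v α i.succ (t i)
    have hslice (a : Fin 2) (t : Fin m → Fin 2) :
        Wstate (m + 1) (Fin.cons a t) + c * zeroState (m + 1) (Fin.cons a t) =
          ∑ α, w α * v α 0 a * S α t := by
      simp only [hv, Fin.prod_univ_succ, Fin.cons_zero, Fin.cons_succ, mul_assoc, S]
    have h0 (t) : Wstate m t + c * zeroState m t = ∑ α, w α * v α 0 0 * S α t := by
      rw [← hslice, Wstate_cons_zero, zeroState_cons_zero]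
    have h1 (t) : zeroState m t = ∑ α, w α * v α 0 1 * S α t := by
      rw [← hslice, Wstate_cons_one, zeroState_cons_one, mul_zero, add_zero]
    obtain ⟨β, hβ⟩ : ∃ β, w β * v β 0 1 ≠ 0 := by
      by_contra! h
      simpa [zeroState, h] using h1 0
    obtain ⟨s, rfl⟩ : ∃ s, r = s + 1 := Nat.exists_eq_add_one_of_ne_zero β.pos.ne'
    set c' := -(v β 0 0 / v β 0 1)
    set w' : Fin (s + 1) → ℂ := fun α => w α * (v α 0 0 + c' * v α 0 1)
    have hw'β : w' β = 0 := by
      have : v β 0 1 ≠ 0 := right_ne_zero_of_mul hβ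
      simp only [w', c']
      field_simp
      ring
    have hcomb (t) : Wstate m t + (c + c') * zeroState m t =
        ∑ γ, w' (β.succAbove γ) * S (β.succAbove γ) t := by
      calc Wstate m t + (c + c') * zeroState m t = ∑ α, w' α * S α t := by
            rw [add_mul, ← add_assoc, h0, h1, mul_sum, ← sum_add_distrib]
            exact sum_congr rfl fun α _ => by ring
        _ = _ := by rw [Fin.sum_univ_succAbove _ β, hw'β, zero_mul, zero_add]
    have := ih (c + c') (w' ∘ β.succAbove) (fun γ i => v (β.succAbove γ) i.succ) hcomb
    omega

lemma Finset.card_filter_eq_singleton {ι : Type*} [Fintype ι] [DecidableEq ι] (s : Finset ι) :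
    #{a | s = {a}} = if #s = 1 then 1 else 0 := by
  split_ifs with h
  · obtain ⟨a, rfl⟩ := card_eq_one.1 h
    simp [filter_eq]
  · exact card_eq_zero.2 <| filter_eq_empty_iff.2 fun a _ hs => h (hs ▸ card_singleton a)

theorem hasRankLE_Wstate (n : ℕ) : hasRankLE n 2 (Wstate n) n := by
  refine ⟨fun α i k => if (k = 1 ↔ i = α) then 1 else 0, fun j => ?_⟩
  have hprod (α : Fin n) : ∏ i, (if (j i = 1 ↔ i = α) then 1 else 0 : ℂ) =
      if ({i | j i = 1} : Finset (Fin n)) = {α} then 1 else 0 := by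
    simp only [prod_boole, mem_univ, true_implies, Finset.ext_iff, mem_filter, true_and,
      mem_singleton]
  simp only [hprod, sum_boole, card_filter_eq_singleton, Wstate]
  split_ifs <;> simp

theorem le_of_hasRankLE_Wstate {n r : ℕ} (h : hasRankLE n 2 (Wstate n) r) : n ≤ r := by
  obtain ⟨v, hv⟩ := h
  exact le_of_Wstate_add_mul_zeroState_eq_sum 0 1 v (by simpa using hv)

theorem rank_Wstate_general (n : ℕ) : tensorRank n 2 (Wstate n) = n :=
  IsLeast.csInf_eq ⟨hasRankLE_Wstate n, fun _ => le_of_hasRankLE_Wstate⟩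

theorem rank_Wstate (n : ℕ) (hn : 2 ≤ n) : tensorRank n 2 (Wstate n) = n :=
  rank_Wstate_general n
end

section
/- The symmetric separable rank is lower semicontinuous: if ρ_k ∈ M_d(ℂ)^{⊗n} satisfy ρ_k = ∑_{α=1}^r σ_{α,k}^{⊗n} with σ_{α,k} psd, and ρ_k → ρ, then ρ = ∑_{α=1}^r σ_α^{⊗n} for some psd matrices σ_α. -/
/-!
Decompositions of nearby matrices cannot escape to infinity: the diagonal entry of
`∑_α σ_α^{⊗n}` at `(i…i, i…i)` is `∑_α (σ_α)_{ii}^n`, so for `n ≥ 1` it bounds every diagonal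
entry of every `σ_α`, and for psd matrices the diagonal bounds all entries. Near `ρ` these
diagonal entries are bounded, so there the decompositions range over a compact set, whose
image under the continuous map `σ ↦ ∑_α σ_α^{⊗n}` is closed.
-/

open scoped ComplexOrder
open Filter Matrix Set

namespace Matrix

variable {𝕜 : Type*} [RCLike 𝕜] {m : Type*}

theorem PosSemidef.norm_apply_sq_le {M : Matrix m m 𝕜} (hM : M.PosSemidef) (i j : m) :
    ‖M i j‖ ^ 2 ≤ RCLike.re (M i i) * RCLike.re (M j j) := by
  have hdet := (hM.submatrix ![i, j]).det_nonneg
  simp only [det_fin_two, submatrix_apply, Matrix.cons_val_zero, Matrix.cons_val_one] at hdet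
  rw [← hM.1.apply j i, RCLike.star_def, RCLike.mul_conj, ← hM.1.coe_re_apply_self i,
    ← hM.1.coe_re_apply_self j, sub_nonneg] at hdet
  exact_mod_cast hdet

theorem PosSemidef.norm_apply_le {M : Matrix m m 𝕜} (hM : M.PosSemidef) (i j : m) :
    ‖M i j‖ ≤ RCLike.re (M i i) + RCLike.re (M j j) := by
  have hi : 0 ≤ RCLike.re (M i i) := (RCLike.nonneg_iff.mp hM.diag_nonneg).1
  have hj : 0 ≤ RCLike.re (M j j) := (RCLike.nonneg_iff.mp hM.diag_nonneg).1
  nlinarith [hM.norm_apply_sq_le i j, norm_nonneg (M i j)]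

theorem isClosed_setOf_posSemidef [Fintype m] : IsClosed {M : Matrix m m 𝕜 | M.PosSemidef} := by
  simp only [posSemidef_iff_dotProduct_mulVec, ofPred_and, ofPred_forall]
  exact (isClosed_eq continuous_id.matrix_conjTranspose continuous_id).inter
    (isClosed_iInter fun x => isClosed_le continuous_const (by fun_prop))

variable (𝕜) in
def boundedPosSemidefTuples (κ : Type*) (c : m → ℝ) : Set (κ → Matrix m m 𝕜) :=
  {τ | ∀ α, (τ α).PosSemidef ∧ ∀ i, RCLike.re (τ α i i) ≤ c i}

theorem isCompact_boundedPosSemidefTuples [Fintype m] (κ : Type*) (c : m → ℝ) :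
    IsCompact (boundedPosSemidefTuples 𝕜 κ c) := by
  have hball : IsCompact (univ.pi fun _ : κ => univ.pi fun i : m => univ.pi fun j : m =>
      Metric.closedBall (0 : 𝕜) (c i + c j)) :=
    isCompact_univ_pi fun _ => isCompact_univ_pi fun _ => isCompact_univ_pi fun _ =>
      isCompact_closedBall _ _
  refine hball.of_isClosed_subset ?_ fun τ hτ α _ i _ j _ => ?_
  · simp only [boundedPosSemidefTuples, ofPred_forall, ofPred_and]
    refine isClosed_iInter fun α =>
      .inter ?_ (isClosed_iInter fun i => isClosed_le ?_ continuous_const)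
    · exact isClosed_setOf_posSemidef.preimage (f := fun τ : κ → Matrix m m 𝕜 => τ α) (by fun_prop)
    · fun_prop
  · rw [mem_closedBall_zero_iff]
    exact ((hτ α).1.norm_apply_le i j).trans (add_le_add ((hτ α).2 i) ((hτ α).2 j))

variable (ι : Type*) [Fintype ι] {κ : Type*} [Fintype κ]

def symTensorPowerSum (τ : κ → Matrix m m 𝕜) : Matrix (ι → m) (ι → m) 𝕜 :=
  of fun j j' => ∑ α, ∏ i, τ α (j i) (j' i)

theorem continuous_symTensorPowerSum :
    Continuous (symTensorPowerSum ι : (κ → Matrix m m 𝕜) → Matrix (ι → m) (ι → m) 𝕜) :=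
  continuous_matrix fun j j' => by unfold symTensorPowerSum; fun_prop

theorem symTensorPowerSum_apply_const (τ : κ → Matrix m m 𝕜) (i : m) :
    symTensorPowerSum ι τ (fun _ => i) (fun _ => i) = ∑ α, τ α i i ^ Fintype.card ι := by
  simp [symTensorPowerSum]

variable {ι} in
theorem re_apply_self_le_symTensorPowerSum [Nonempty ι] {τ : κ → Matrix m m 𝕜}
    (hτ : ∀ α, (τ α).PosSemidef) (α : κ) (i : m) :
    RCLike.re (τ α i i) ≤ max 1 (RCLike.re (symTensorPowerSum ι τ (fun _ => i) (fun _ => i))) := by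
  have hre (β) : RCLike.re (τ β i i) = τ β i i := (hτ β).1.coe_re_apply_self i
  have hnonneg (β) : 0 ≤ RCLike.re (τ β i i) := (RCLike.nonneg_iff.mp (hτ β).diag_nonneg).1
  have hsum : RCLike.re (symTensorPowerSum ι τ (fun _ => i) (fun _ => i)) =
      ∑ β, RCLike.re (τ β i i) ^ Fintype.card ι := by
    rw [symTensorPowerSum_apply_const, map_sum]
    refine Finset.sum_congr rfl fun β _ => ?_
    rw [← hre, ← RCLike.ofReal_pow]
    simp only [RCLike.ofReal_re]
  rcases le_or_gt (RCLike.re (τ α i i)) 1 with h | h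
  · exact le_max_of_le_left h
  · refine le_max_of_le_right ?_
    rw [hsum]
    calc RCLike.re (τ α i i) ≤ RCLike.re (τ α i i) ^ Fintype.card ι :=
          le_self_pow₀ h.le Fintype.card_ne_zero
      _ ≤ _ := Finset.single_le_sum (fun β _ => pow_nonneg (hnonneg β) _) (Finset.mem_univ α)

theorem isClosed_image_symTensorPowerSum [Fintype m] :
    IsClosed (symTensorPowerSum ι '' {τ : κ → Matrix m m 𝕜 | ∀ α, (τ α).PosSemidef}) := by
  rcases isEmpty_or_nonempty ι with _ | _
  · refine Set.Subsingleton.isClosed ?_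
    rintro _ ⟨τ, -, rfl⟩ _ ⟨τ', -, rfl⟩
    ext j j'
    simp [symTensorPowerSum]
  rw [← closure_subset_iff_isClosed]
  intro ρ hρ
  set U := {ρ' : Matrix (ι → m) (ι → m) 𝕜 | ∀ i, RCLike.re (ρ' (fun _ => i) (fun _ => i)) <
    RCLike.re (ρ (fun _ => i) (fun _ => i)) + 1}
  have hU : IsOpen U := by
    simp only [U, ofPred_forall]
    exact isOpen_iInter_of_finite fun i => isOpen_lt (by fun_prop) continuous_const
  set c : m → ℝ := fun i => max 1 (RCLike.re (ρ (fun _ => i) (fun _ => i)) + 1)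
  have hsub : U ∩ symTensorPowerSum ι '' {τ : κ → Matrix m m 𝕜 | ∀ α, (τ α).PosSemidef} ⊆
      symTensorPowerSum ι '' boundedPosSemidefTuples 𝕜 κ c := by
    rintro _ ⟨hτU, τ, hτ, rfl⟩
    exact ⟨τ, fun α => ⟨hτ α, fun i => (re_apply_self_le_symTensorPowerSum hτ α i).trans
      (max_le_max le_rfl (hτU i).le)⟩, rfl⟩
  have hclosed : IsClosed (symTensorPowerSum ι '' boundedPosSemidefTuples 𝕜 κ c) :=
    ((isCompact_boundedPosSemidefTuples κ c).image (continuous_symTensorPowerSum ι)).isClosed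
  obtain ⟨τ, hτ, rfl⟩ := closure_minimal hsub hclosed (hU.inter_closure ⟨fun i => lt_add_one _, hρ⟩)
  exact ⟨τ, fun α => (hτ α).1, rfl⟩

end Matrix

theorem symSepRank_lowerSemicontinuous (n d r : ℕ)
    (ρseq : ℕ → Matrix (Fin n → Fin d) (Fin n → Fin d) ℂ)
    (ρ : Matrix (Fin n → Fin d) (Fin n → Fin d) ℂ)
    (σ : ℕ → Fin r → Matrix (Fin d) (Fin d) ℂ)
    (hσ : ∀ k α, (σ k α).PosSemidef)
    (hdec : ∀ k j j', ρseq k j j' = ∑ α, ∏ i, σ k α (j i) (j' i))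
    (hconv : Filter.Tendsto ρseq Filter.atTop (nhds ρ)) :
    ∃ τ : Fin r → Matrix (Fin d) (Fin d) ℂ,
      (∀ α, (τ α).PosSemidef) ∧ ∀ j j', ρ j j' = ∑ α, ∏ i, τ α (j i) (j' i) := by
  have hρseq (k : ℕ) : symTensorPowerSum (Fin n) (σ k) = ρseq k :=
    ext fun j j' => (hdec k j j').symm
  obtain ⟨τ, hτ, rfl⟩ := (isClosed_image_symTensorPowerSum (𝕜 := ℂ) (Fin n)).mem_of_tendsto hconv
    (Eventually.of_forall fun k => ⟨σ k, hσ k, hρseq k⟩)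
  exact ⟨τ, hτ, fun _ _ => rfl⟩
end

section
/- For every diagonal embedding ρ_T = ∑_{j_1,...,j_n} T_{j_1,...,j_n} |j_1,...,j_n⟩⟨j_1,...,j_n| of a nonnegative tensor T ∈ (ℝ^d)^{⊗n}, one has nnrank(T) = seprank(ρ_T): every nonnegative decomposition of T of size r yields a separable decomposition of ρ_T of size r, and conversely. -/
open scoped ComplexOrder

/-- `T` admits a nonnegative tensor decomposition with at most `r` terms. -/
def hasNNRankLE (n d : ℕ) (T : (Fin n → Fin d) → ℝ) (r : ℕ) : Prop :=
  ∃ v : Fin r → Fin n → Fin d → ℝ,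
    (∀ α i j, 0 ≤ v α i j) ∧ ∀ j, T j = ∑ α, ∏ i, v α i (j i)

/-- `ρ` admits a separable decomposition with at most `r` terms. -/
def hasSepRankLE (n d : ℕ) (ρ : Matrix (Fin n → Fin d) (Fin n → Fin d) ℂ) (r : ℕ) : Prop :=
  ∃ σ : Fin r → Fin n → Matrix (Fin d) (Fin d) ℂ,
    (∀ α i, (σ α i).PosSemidef) ∧
    ∀ j k, ρ j k = ∑ α, ∏ i, σ α i (j i) (k i)

/-- The diagonal embedding ρ_T of a tensor T. -/
noncomputable def diagEmbed (n d : ℕ) (T : (Fin n → Fin d) → ℝ) :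
    Matrix (Fin n → Fin d) (Fin n → Fin d) ℂ :=
  Matrix.of fun j k => if j = k then (T j : ℂ) else 0

/-!
A nonnegative decomposition `T = ∑ α, ⊗ i, v α i` yields the separable decomposition of `ρ_T`
into the diagonal psd matrices `diag (v α i)`, because a tensor product of diagonal matrices is
diagonal. Conversely, reading a separable decomposition of `ρ_T` on the diagonal gives a
decomposition of `T` whose factors are the diagonals of psd matrices, hence nonnegative.
-/

theorem Matrix.prod_diagonal_apply {ι κ R : Type*} [Fintype ι] [DecidableEq κ]
    [CommMonoidWithZero R] (f : ι → κ → R) (j k : ι → κ) :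
    ∏ i, diagonal (f i) (j i) (k i) = if j = k then ∏ i, f i (j i) else 0 := by
  simp only [diagonal_apply, Finset.prod_ite_zero, Finset.mem_univ, forall_const, funext_iff]

theorem Matrix.PosSemidef.ofReal_re_apply_self {m : Type*} {M : Matrix m m ℂ}
    (hM : M.PosSemidef) (i : m) : ((M i i).re : ℂ) = M i i :=
  (Complex.eq_re_of_ofReal_le (Complex.ofReal_zero ▸ hM.diag_nonneg)).symm

theorem hasSepRankLE_diagEmbed_of_hasNNRankLE {n d r : ℕ} {T : (Fin n → Fin d) → ℝ}
    (hT : hasNNRankLE n d T r) : hasSepRankLE n d (diagEmbed n d T) r := by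
  obtain ⟨v, hv_nonneg, hvT⟩ := hT
  refine ⟨fun α i => Matrix.diagonal fun m => (v α i m : ℂ), fun α i => ?_, fun j k => ?_⟩
  · exact Matrix.posSemidef_diagonal_iff.mpr fun m => Complex.zero_le_real.mpr (hv_nonneg α i m)
  · simp_rw [Matrix.prod_diagonal_apply, diagEmbed, Matrix.of_apply, hvT]
    split_ifs <;> simp

theorem hasNNRankLE_of_hasSepRankLE_diagEmbed {n d r : ℕ} {T : (Fin n → Fin d) → ℝ}
    (hρ : hasSepRankLE n d (diagEmbed n d T) r) : hasNNRankLE n d T r := by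
  obtain ⟨σ, hσ_psd, hσρ⟩ := hρ
  refine ⟨fun α i m => (σ α i m m).re, fun α i m => ?_, fun j => ?_⟩
  · exact Complex.nonneg_iff.mp ((hσ_psd α i).diag_nonneg (i := m)) |>.1
  · apply Complex.ofReal_injective
    push_cast
    simp_rw [(hσ_psd _ _).ofReal_re_apply_self]
    simpa [diagEmbed] using hσρ j j

theorem hasNNRankLE_iff_hasSepRankLE_diagEmbed (n d r : ℕ) (T : (Fin n → Fin d) → ℝ) :
    hasNNRankLE n d T r ↔ hasSepRankLE n d (diagEmbed n d T) r :=
  ⟨hasSepRankLE_diagEmbed_of_hasNNRankLE, hasNNRankLE_of_hasSepRankLE_diagEmbed⟩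

theorem nnRank_eq_sepRank_diagEmbed_general (n d : ℕ) (T : (Fin n → Fin d) → ℝ) :
    (∀ r, hasNNRankLE n d T r ↔ hasSepRankLE n d (diagEmbed n d T) r) ∧
    sInf {r | hasNNRankLE n d T r} = sInf {r | hasSepRankLE n d (diagEmbed n d T) r} := by
  simp only [hasNNRankLE_iff_hasSepRankLE_diagEmbed, implies_true, and_self]

theorem nnRank_eq_sepRank_diagEmbed (n d : ℕ) (T : (Fin n → Fin d) → ℝ)
    (hT : ∀ j, 0 ≤ T j) :
    (∀ r, hasNNRankLE n d T r ↔ hasSepRankLE n d (diagEmbed n d T) r) ∧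
    sInf {r | hasNNRankLE n d T r} = sInf {r | hasSepRankLE n d (diagEmbed n d T) r} :=
  nnRank_eq_sepRank_diagEmbed_general n d T
end
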